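/- arXiv:2206.00567 — 4 statements merged into one kernel-verified Lean document; each statement's English description precedes it below -/
import Mathlib

section
/- Let a > 0 be a real number and θ₁, θ₂, θ₃ real numbers. Set z_j = a·e^{iθ_j} for j = 1,2,3 and z₄ = a^{-3}·e^{-i(θ₁+θ₂+θ₃)}, so that z₁z₂z₃z₄ = 1. If the complex conjugate of z₁+z₂+z₃+z₄ equals z₁z₂z₃+z₁z₂z₄+z₁z₃z₄+z₂z₃z₄, then a = 1, i.e. |z₁| = |z₂| = |z₃| = |z₄| = 1. -/
/-!
Since `z₁z₂z₃z₄ = 1`, `σ₃(z) = ∑ zⱼ⁻¹`, and `conj z - z⁻¹ = (|z|² - 1) z⁻¹`, so the hypothesis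
says `∑ (|zⱼ|² - 1) zⱼ⁻¹ = 0`. With `|z₁| = |z₂| = |z₃| = a` and `z₄⁻¹ = z₁z₂z₃`, if `a² ≠ 1`
we may divide by `a² - 1` and get `z₁⁻¹ + z₂⁻¹ + z₃⁻¹ = (a⁴ + a² + 1) a⁻⁶ z₁z₂z₃`. Comparing
norms gives `a⁴ + a² + 1 ≤ 3a²`, i.e. `(a² - 1)² ≤ 0`.
-/

open Complex ComplexConjugate

theorem Complex.conj_sub_inv (z : ℂ) : conj z - z⁻¹ = (‖z‖ ^ 2 - 1 : ℝ) * z⁻¹ := by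
  rcases eq_or_ne z 0 with rfl | hz
  · simp
  · rw [← mul_inv_cancel_right₀ hz (conj z), mul_comm _ z, mul_conj']
    push_cast
    ring

theorem esymm3_eq_sum_inv_of_prod_eq_one {K : Type*} [Field K] {z₁ z₂ z₃ z₄ : K}
    (h : z₁ * z₂ * z₃ * z₄ = 1) :
    z₁ * z₂ * z₃ + z₁ * z₂ * z₄ + z₁ * z₃ * z₄ + z₂ * z₃ * z₄ = z₁⁻¹ + z₂⁻¹ + z₃⁻¹ + z₄⁻¹ := by
  have h₁ : z₁ ≠ 0 := by rintro rfl; simp at h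
  have h₂ : z₂ ≠ 0 := by rintro rfl; simp at h
  have h₃ : z₃ ≠ 0 := by rintro rfl; simp at h
  have h₄ : z₄ ≠ 0 := by rintro rfl; simp at h
  field_simp
  linear_combination (z₁ * z₂ * z₃ + z₁ * z₂ * z₄ + z₁ * z₃ * z₄ + z₂ * z₃ * z₄) * h

theorem eq_one_of_three_norms_eq_of_conj_sum_eq_esymm3 {a : ℝ} (ha : 0 < a) {z₁ z₂ z₃ z₄ : ℂ}
    (h₁ : ‖z₁‖ = a) (h₂ : ‖z₂‖ = a) (h₃ : ‖z₃‖ = a) (hprod : z₁ * z₂ * z₃ * z₄ = 1)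
    (h : conj (z₁ + z₂ + z₃ + z₄) =
      z₁ * z₂ * z₃ + z₁ * z₂ * z₄ + z₁ * z₃ * z₄ + z₂ * z₃ * z₄) :
    a = 1 := by
  rw [esymm3_eq_sum_inv_of_prod_eq_one hprod, map_add, map_add, map_add] at h
  have hz₄ : z₄⁻¹ = z₁ * z₂ * z₃ := (eq_inv_of_mul_eq_one_left hprod).symm
  have hn₄ : ‖z₄‖ = (a ^ 3)⁻¹ := by
    rw [← inv_inv ‖z₄‖, ← norm_inv, hz₄, norm_mul, norm_mul, h₁, h₂, h₃]
    ring
  have hvanish :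
      (conj z₁ - z₁⁻¹) + (conj z₂ - z₂⁻¹) + (conj z₃ - z₃⁻¹) + (conj z₄ - z₄⁻¹) = 0 := by
    linear_combination h
  rw [conj_sub_inv, conj_sub_inv, conj_sub_inv, conj_sub_inv, h₁, h₂, h₃, hn₄, hz₄] at hvanish
  suffices hsq : a ^ 2 = 1 from (pow_eq_one_iff_of_nonneg ha.le two_ne_zero).mp hsq
  by_contra hne
  have hcoeff : ((a ^ 2 - 1 : ℝ) : ℂ) * ((a ^ 4 + a ^ 2 + 1) / a ^ 6 : ℝ) =
      -(((a ^ 3)⁻¹ ^ 2 - 1 : ℝ) : ℂ) := by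
    rw [← ofReal_mul, ← ofReal_neg]
    congr 1
    field_simp
    ring
  have hS : z₁⁻¹ + z₂⁻¹ + z₃⁻¹ = ((a ^ 4 + a ^ 2 + 1) / a ^ 6 : ℝ) * (z₁ * z₂ * z₃) := by
    have ha₂ : ((a ^ 2 - 1 : ℝ) : ℂ) ≠ 0 := by exact_mod_cast sub_ne_zero.mpr hne
    apply mul_left_cancel₀ ha₂
    linear_combination hvanish - (z₁ * z₂ * z₃) * hcoeff
  have hle : ‖z₁⁻¹ + z₂⁻¹ + z₃⁻¹‖ ≤ 3 / a := by
    calc ‖z₁⁻¹ + z₂⁻¹ + z₃⁻¹‖ ≤ ‖z₁⁻¹‖ + ‖z₂⁻¹‖ + ‖z₃⁻¹‖ := norm_add₃_le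
      _ = 3 / a := by rw [norm_inv, norm_inv, norm_inv, h₁, h₂, h₃]; ring
  rw [hS, norm_mul, norm_mul, norm_mul, h₁, h₂, h₃, norm_real,
    Real.norm_of_nonneg (by positivity)] at hle
  have hquad : a ^ 4 + a ^ 2 + 1 ≤ 3 * a ^ 2 := by
    field_simp at hle
    nlinarith
  exact hne (by nlinarith [sq_nonneg (a ^ 2 - 1)])

theorem equal_moduli_forces_unit_circle (a : ℝ) (ha : 0 < a) (θ₁ θ₂ θ₃ : ℝ)
    (z₁ z₂ z₃ z₄ : ℂ)
    (hz₁ : z₁ = (a : ℂ) * Complex.exp (θ₁ * Complex.I))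
    (hz₂ : z₂ = (a : ℂ) * Complex.exp (θ₂ * Complex.I))
    (hz₃ : z₃ = (a : ℂ) * Complex.exp (θ₃ * Complex.I))
    (hz₄ : z₄ = ((a : ℂ) ^ 3)⁻¹ * Complex.exp (-(θ₁ + θ₂ + θ₃) * Complex.I))
    (h : starRingEnd ℂ (z₁ + z₂ + z₃ + z₄) =
      z₁ * z₂ * z₃ + z₁ * z₂ * z₄ + z₁ * z₃ * z₄ + z₂ * z₃ * z₄) :
    a = 1 := by
  have hnorm (θ : ℝ) : ‖(a : ℂ) * exp (θ * I)‖ = a := by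
    rw [norm_mul, norm_exp_ofReal_mul_I, norm_real, Real.norm_of_nonneg ha.le, mul_one]
  have hprod : z₁ * z₂ * z₃ * z₄ = 1 := by
    have ha₃ : (a : ℂ) ^ 3 ≠ 0 := pow_ne_zero 3 (ofReal_ne_zero.mpr ha.ne')
    calc z₁ * z₂ * z₃ * z₄
        = ((a : ℂ) ^ 3 * ((a : ℂ) ^ 3)⁻¹) *
            exp (θ₁ * I + θ₂ * I + θ₃ * I + -(θ₁ + θ₂ + θ₃) * I) := by
          rw [hz₁, hz₂, hz₃, hz₄, exp_add, exp_add, exp_add]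
          ring
      _ = 1 := by
          rw [mul_inv_cancel₀ ha₃, one_mul, ← exp_zero]
          congr 1
          ring
  exact eq_one_of_three_norms_eq_of_conj_sum_eq_esymm3 ha (hz₁ ▸ hnorm θ₁) (hz₂ ▸ hnorm θ₂)
    (hz₃ ▸ hnorm θ₃) hprod h
end

section
/- Let q > 1 be real, α > 0, θ real, and let z₁ = z₂ with z₁²·z₃·z₄ = 1 and z₃ = qz₄ = qαe^{iθ}, so that z₁ = z₂ = (√q α)^{-1} e^{-iθ}. If conj(σ₁(z)) = σ₃(z) and σ₂(z) is real, then α = q^{-1/2}. -/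
open Complex

set_option maxHeartbeats 1000000 in
theorem repeated_root_case_forces' (q α θ : ℝ) (hq : 1 < q) (hα : 0 < α)
    (z₁ z₂ z₃ z₄ : ℂ)
    (hz₁ : z₁ = ((Real.sqrt q * α : ℝ) : ℂ)⁻¹ * Complex.exp (-θ * Complex.I))
    (hz₂ : z₂ = ((Real.sqrt q * α : ℝ) : ℂ)⁻¹ * Complex.exp (-θ * Complex.I))
    (hz₃ : z₃ = (q : ℂ) * (α : ℂ) * Complex.exp (θ * Complex.I))
    (hz₄ : z₄ = (α : ℂ) * Complex.exp (θ * Complex.I))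
    (hσ₁₃ : starRingEnd ℂ (z₁ + z₂ + z₃ + z₄) =
      z₁ * z₂ * z₃ + z₁ * z₂ * z₄ + z₁ * z₃ * z₄ + z₂ * z₃ * z₄)
    (hσ₂ : (z₁ * z₂ + z₁ * z₃ + z₁ * z₄ + z₂ * z₃ + z₂ * z₄ + z₃ * z₄).im = 0) :
    α = (Real.sqrt q)⁻¹ := by
  have hq0 : (0:ℝ) < q := by linarith
  have hs0 : 0 < Real.sqrt q := Real.sqrt_pos.mpr hq0
  set s := Real.sqrt q with hs
  have hs1 : 1 < s := by
    nlinarith [Real.sq_sqrt hq0.le, hs0]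
  have hsq : s^2 = q := Real.sq_sqrt hq0.le
  have hsα : s * α ≠ 0 := by positivity
  have he : Complex.exp (θ*I) = (Real.cos θ : ℂ) + (Real.sin θ : ℂ) * I := by
    rw [Complex.exp_mul_I]; push_cast; ring
  have he' : Complex.exp (-θ*I) = (Real.cos θ : ℂ) - (Real.sin θ : ℂ) * I := by
    have : (-θ : ℂ) * I = (↑(-θ):ℂ) * I := by push_cast; ring
    rw [this, Complex.exp_mul_I]; push_cast; rw [Complex.cos_neg, Complex.sin_neg]; ring
  subst hz₁ hz₂ hz₃ hz₄
  rw [he, he'] at hσ₁₃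
  have hsα' : ((s*α : ℝ) : ℂ) ≠ 0 := by exact_mod_cast (mul_ne_zero hs0.ne' hα.ne')
  rw [← Complex.ofReal_inv] at hσ₁₃
  rw [Complex.ext_iff] at hσ₁₃
  obtain ⟨h1, h2⟩ := hσ₁₃
  simp only [Complex.add_re, Complex.add_im, Complex.mul_re, Complex.mul_im, Complex.ofReal_re,
    Complex.ofReal_im, Complex.I_re, Complex.I_im, Complex.conj_re, Complex.conj_im,
    Complex.sub_re, Complex.sub_im, map_add, map_mul] at h1 h2
  have hsa : s * α ≠ 0 := hsα
  field_simp at h1 h2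
  ring_nf at h1 h2
  have hpyth : Real.sin θ ^ 2 + Real.cos θ ^ 2 = 1 := Real.sin_sq_add_cos_sq θ
  have h1' : Real.cos θ * (s-1)^2 * ((s*α)^2-1) * (α^8 * s^7) = 0 := by
    linear_combination (α^7*s^7)*h1 + (α^7*s^7*(2*s*α^3*Real.cos θ*q + α*Real.cos θ*(1+q)))*hpyth
      + (α^7*s^7*Real.cos θ*(s^2*α^3-2*s*α^3-α))*hsq
  have h2' : Real.sin θ * (s+1)^2 * ((s*α)^2-1) * (α^8 * s^7) = 0 := by
    linear_combination -(α^7*s^7)*h2 - (α^7*s^7*(2*s*α^3*Real.sin θ*q - α*Real.sin θ*(1+q)))*hpyth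
      + (α^7*s^7*Real.sin θ*(s^2*α^3+2*s*α^3-α))*hsq
  have hfac : ((s*α)^2 - 1) * (α^8*s^7) * ((Real.cos θ)^2*(s-1)^2 + (Real.sin θ)^2*(s+1)^2) = 0 := by
    linear_combination (Real.cos θ)*h1' + (Real.sin θ)*h2'
  have hpos : (0:ℝ) < (Real.cos θ)^2*(s-1)^2 + (Real.sin θ)^2*(s+1)^2 := by
    nlinarith [sq_nonneg (Real.cos θ), sq_nonneg (Real.sin θ), sq_nonneg (s-1), sq_nonneg (s+1)]
  have hpos2 : (0:ℝ) < α^8*s^7 := by positivity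
  have key : (s*α)^2 = 1 := by
    rcases mul_eq_zero.mp hfac with h | h
    · rcases mul_eq_zero.mp h with h' | h'
      · linarith
      · linarith
    · linarith
  have : s * α = 1 := by nlinarith [mul_pos hs0 hα]
  field_simp
  linarith [this]
end

section
/- Let q, z₁, z₂, z₃, z₄ be indeterminates with z₁z₂z₃z₄ = 1, and let C_{ijk} be defined as in the context. Then the polynomial obtained as the numerator (over the common denominator (z₁-z₂)(z₁-z₃)(z₁-z₄)(z₂-z₃)(z₂-z₄)(z₃-z₄)) of C_{123}+C_{124}+C_{213}+C_{214} equals, up to sign, (q+1)²·(z₁-z₂)(z₁-qz₃)(z₁-qz₄)(z₂-qz₃)(z₂-qz₄)(z₃-z₄). -/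
/-!
Over the common denominator `Δ = ∏_{i<j} (zᵢ - zⱼ)` the four denominators are `Δ, -Δ, -Δ, Δ`, so the
numerator is an alternating sum of the four products of `(zᵢ - q zⱼ)`; that this alternating sum
factors as `(q + 1)² (z₁ - z₂)(z₁ - q z₃)(z₁ - q z₄)(z₂ - q z₃)(z₂ - q z₄)(z₃ - z₄)` is a polynomial
identity over any commutative ring.
-/

theorem alternating_numerator_eq {R : Type*} [CommRing R] (q z₁ z₂ z₃ z₄ : R) :
    (z₁ - q * z₃) * (z₁ - q * z₂) * (z₁ - q * z₄) * (z₂ - q * z₃) * (z₂ - q * z₄) *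
        (z₃ - q * z₄) -
      (z₁ - q * z₄) * (z₁ - q * z₂) * (z₁ - q * z₃) * (z₂ - q * z₄) * (z₂ - q * z₃) *
        (z₄ - q * z₃) -
      (z₂ - q * z₃) * (z₂ - q * z₁) * (z₂ - q * z₄) * (z₁ - q * z₃) * (z₁ - q * z₄) *
        (z₃ - q * z₄) +
      (z₂ - q * z₄) * (z₂ - q * z₁) * (z₂ - q * z₃) * (z₁ - q * z₄) * (z₁ - q * z₃) *
        (z₄ - q * z₃) =
    (q + 1) ^ 2 * (z₁ - z₂) * (z₁ - q * z₃) * (z₁ - q * z₄) * (z₂ - q * z₃) *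
      (z₂ - q * z₄) * (z₃ - z₄) := by
  ring

theorem div_add_div_add_div_add_div_mul_of_eq_neg {K : Type*} [Field K]
    {a b c d D₁ D₂ D₃ D₄ D : K} (hD : D ≠ 0)
    (h₁ : D₁ = D) (h₂ : D₂ = -D) (h₃ : D₃ = -D) (h₄ : D₄ = D) :
    (a / D₁ + b / D₂ + c / D₃ + d / D₄) * D = a - b - c + d := by
  subst h₁ h₂ h₃ h₄
  field_simp
  ring

theorem numerator_C123_C124_C213_C214_general (q : ℂ) (z₁ z₂ z₃ z₄ : ℂ)
    (h₁₂ : z₁ ≠ z₂) (h₁₃ : z₁ ≠ z₃) (h₁₄ : z₁ ≠ z₄)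
    (h₂₃ : z₂ ≠ z₃) (h₂₄ : z₂ ≠ z₄) (h₃₄ : z₃ ≠ z₄) :
    ∃ ε : ℂ, (ε = 1 ∨ ε = -1) ∧
    ((z₁ - q * z₃) * (z₁ - q * z₂) * (z₁ - q * z₄) * (z₂ - q * z₃) * (z₂ - q * z₄) *
        (z₃ - q * z₄) /
      ((z₁ - z₃) * (z₁ - z₂) * (z₁ - z₄) * (z₂ - z₃) * (z₂ - z₄) * (z₃ - z₄)) +
     (z₁ - q * z₄) * (z₁ - q * z₂) * (z₁ - q * z₃) * (z₂ - q * z₄) * (z₂ - q * z₃) *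
        (z₄ - q * z₃) /
      ((z₁ - z₄) * (z₁ - z₂) * (z₁ - z₃) * (z₂ - z₄) * (z₂ - z₃) * (z₄ - z₃)) +
     (z₂ - q * z₃) * (z₂ - q * z₁) * (z₂ - q * z₄) * (z₁ - q * z₃) * (z₁ - q * z₄) *
        (z₃ - q * z₄) /
      ((z₂ - z₃) * (z₂ - z₁) * (z₂ - z₄) * (z₁ - z₃) * (z₁ - z₄) * (z₃ - z₄)) +
     (z₂ - q * z₄) * (z₂ - q * z₁) * (z₂ - q * z₃) * (z₁ - q * z₄) * (z₁ - q * z₃) *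
        (z₄ - q * z₃) /
      ((z₂ - z₄) * (z₂ - z₁) * (z₂ - z₃) * (z₁ - z₄) * (z₁ - z₃) * (z₄ - z₃))) *
    ((z₁ - z₂) * (z₁ - z₃) * (z₁ - z₄) * (z₂ - z₃) * (z₂ - z₄) * (z₃ - z₄)) =
    ε * (q + 1) ^ 2 * (z₁ - z₂) * (z₁ - q * z₃) * (z₁ - q * z₄) * (z₂ - q * z₃) *
      (z₂ - q * z₄) * (z₃ - z₄) := by
  have hΔ : (z₁ - z₂) * (z₁ - z₃) * (z₁ - z₄) * (z₂ - z₃) * (z₂ - z₄) * (z₃ - z₄) ≠ 0 := by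
    simp [sub_eq_zero, *]
  refine ⟨1, Or.inl rfl, ?_⟩
  rw [div_add_div_add_div_add_div_mul_of_eq_neg hΔ (by ring) (by ring) (by ring) (by ring),
    alternating_numerator_eq, one_mul]

theorem numerator_C123_C124_C213_C214 (q : ℂ) (z₁ z₂ z₃ z₄ : ℂ)
    (h₁₂ : z₁ ≠ z₂) (h₁₃ : z₁ ≠ z₃) (h₁₄ : z₁ ≠ z₄)
    (h₂₃ : z₂ ≠ z₃) (h₂₄ : z₂ ≠ z₄) (h₃₄ : z₃ ≠ z₄)
    (hprod : z₁ * z₂ * z₃ * z₄ = 1) :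
    ∃ ε : ℂ, (ε = 1 ∨ ε = -1) ∧
    ((z₁ - q * z₃) * (z₁ - q * z₂) * (z₁ - q * z₄) * (z₂ - q * z₃) * (z₂ - q * z₄) *
        (z₃ - q * z₄) /
      ((z₁ - z₃) * (z₁ - z₂) * (z₁ - z₄) * (z₂ - z₃) * (z₂ - z₄) * (z₃ - z₄)) +
     (z₁ - q * z₄) * (z₁ - q * z₂) * (z₁ - q * z₃) * (z₂ - q * z₄) * (z₂ - q * z₃) *
        (z₄ - q * z₃) /
      ((z₁ - z₄) * (z₁ - z₂) * (z₁ - z₃) * (z₂ - z₄) * (z₂ - z₃) * (z₄ - z₃)) +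
     (z₂ - q * z₃) * (z₂ - q * z₁) * (z₂ - q * z₄) * (z₁ - q * z₃) * (z₁ - q * z₄) *
        (z₃ - q * z₄) /
      ((z₂ - z₃) * (z₂ - z₁) * (z₂ - z₄) * (z₁ - z₃) * (z₁ - z₄) * (z₃ - z₄)) +
     (z₂ - q * z₄) * (z₂ - q * z₁) * (z₂ - q * z₃) * (z₁ - q * z₄) * (z₁ - q * z₃) *
        (z₄ - q * z₃) /
      ((z₂ - z₄) * (z₂ - z₁) * (z₂ - z₃) * (z₁ - z₄) * (z₁ - z₃) * (z₄ - z₃))) *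
    ((z₁ - z₂) * (z₁ - z₃) * (z₁ - z₄) * (z₂ - z₃) * (z₂ - z₄) * (z₃ - z₄)) =
    ε * (q + 1) ^ 2 * (z₁ - z₂) * (z₁ - q * z₃) * (z₁ - q * z₄) * (z₂ - q * z₃) *
      (z₂ - q * z₄) * (z₃ - z₄) :=
  numerator_C123_C124_C213_C214_general q z₁ z₂ z₃ z₄ h₁₂ h₁₃ h₁₄ h₂₃ h₂₄ h₃₄
end

section
/- Let λ₁, λ₂, λ₃, q ∈ ℂ with q ≠ 0, and let a, b, c : ℕ → ℂ satisfy the coupled relations λ₁·a_{ℓ+1} = (q³+q²+q)·b_{ℓ+1} + a_{ℓ+2}, λ₂·a_ℓ = (q⁴+q³+q²)·c_ℓ + (q²+q+1)·b_{ℓ+1}, and λ₃·a_{ℓ-1} = q³·a_{ℓ-2} + (q²+q+1)·c_ℓ for all ℓ ≥ 2. Setting ã_ℓ = a_ℓ/q^ℓ, b̃_ℓ = b_ℓ/q^{ℓ+1}, c̃_ℓ = c_ℓ/q^{ℓ+2}, one has ã_{ℓ+2} - (λ₁/q)ã_{ℓ+1} + (λ₂/q)ã_ℓ - λ₃ã_{ℓ-1}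 + q²ã_{ℓ-2} = 0 for all ℓ ≥ 2. -/
theorem elimination_to_fourth_order_recurrence
    (q lam₁ lam₂ lam₃ : ℂ) (hq : q ≠ 0) (a b c : ℕ → ℂ)
    (h1 : ∀ ℓ : ℕ, 2 ≤ ℓ →
      lam₁ * a (ℓ + 1) = (q ^ 3 + q ^ 2 + q) * b (ℓ + 1) + a (ℓ + 2))
    (h2 : ∀ ℓ : ℕ, 2 ≤ ℓ →
      lam₂ * a ℓ = (q ^ 4 + q ^ 3 + q ^ 2) * c ℓ + (q ^ 2 + q + 1) * b (ℓ + 1))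
    (h3 : ∀ ℓ : ℕ, 2 ≤ ℓ →
      lam₃ * a (ℓ - 1) = q ^ 3 * a (ℓ - 2) + (q ^ 2 + q + 1) * c ℓ) :
    ∀ ℓ : ℕ, 2 ≤ ℓ →
      a (ℓ + 2) / q ^ (ℓ + 2) - (lam₁ / q) * (a (ℓ + 1) / q ^ (ℓ + 1))
        + (lam₂ / q) * (a ℓ / q ^ ℓ) - lam₃ * (a (ℓ - 1) / q ^ (ℓ - 1))
        + q ^ 2 * (a (ℓ - 2) / q ^ (ℓ - 2)) = 0 := by
  intro ℓ hℓ
  obtain ⟨m, rfl⟩ : ∃ m, ℓ = m + 2 := ⟨ℓ - 2, by omega⟩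
  have e1 := h1 (m + 2) (by omega)
  have e2 := h2 (m + 2) (by omega)
  have e3 := h3 (m + 2) (by omega)
  simp only [show m + 2 - 1 = m + 1 from rfl, show m + 2 - 2 = m from rfl] at e3 ⊢
  have key : a (m + 4) = lam₁ * a (m + 3) - q * (lam₂ * a (m + 2))
      + q ^ 3 * (lam₃ * a (m + 1)) - q ^ 6 * a m := by
    linear_combination -e1 + q * e2 - q ^ 3 * e3
  simp only [show m + 2 + 2 = m + 4 from rfl, show m + 2 + 1 = m + 3 from rfl, pow_add,
    div_eq_mul_inv, mul_inv, inv_pow]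
  have hqi : q * q⁻¹ = 1 := mul_inv_cancel₀ hq
  linear_combination ((q ^ m)⁻¹ * q⁻¹ ^ 4) * key
    + (-(q ^ m)⁻¹ * lam₂ * a (m + 2) * q⁻¹ ^ 3) * hqi
    + ((q ^ m)⁻¹ * lam₃ * a (m + 1) * q⁻¹ * (q ^ 2 * q⁻¹ ^ 2 + q * q⁻¹ + 1)) * hqi
    + (-(q ^ m)⁻¹ * q ^ 2 * a m * (q * q⁻¹ + 1) * (q ^ 2 * q⁻¹ ^ 2 + 1)) * hqi
end
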